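/- arXiv:2510.02092 — 3 statements merged into one kernel-verified Lean document; each statement's English description precedes it below -/
import Mathlib

section
/- For all real numbers u, v, every t ∈ [0,1], and every L > 0: |sin( (π/L)·( (tL/(2π))·sin(2πu/L) − (tL/(2π))·sin(2πv/L) ) )| ≤ |sin(π(u−v)/L)|. -/
/-! Writing `sin A - sin B = 2 sin ((A - B)/2) cos ((A + B)/2)`, the argument of the left-hand sine
becomes `t · sin (π(u - v)/L) · cos (π(u + v)/L)`, whose absolute value is at most `|sin (π(u - v)/L)|`;
conclude with `|sin x| ≤ |x|`. -/

open Real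

lemma sin_two_mul_sub_sin_two_mul (x y : ℝ) :
    sin (2 * x) - sin (2 * y) = 2 * sin (x - y) * cos (x + y) := by
  rw [sin_sub_sin]
  ring_nf

lemma abs_sin_mul_sin_mul_cos_le {t : ℝ} (ht : |t| ≤ 1) (x y : ℝ) :
    |sin (t * sin x * cos y)| ≤ |sin x| :=
  calc |sin (t * sin x * cos y)|
      ≤ |t * sin x * cos y| := abs_sin_le_abs
    _ = |t| * |sin x| * |cos y| := by rw [abs_mul, abs_mul]
    _ ≤ 1 * |sin x| * 1 := by gcongr; exact abs_cos_le_one y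
    _ = |sin x| := by ring

theorem sin_interp_bound (u v t L : ℝ) (ht : t ∈ Set.Icc (0:ℝ) 1) (hL : 0 < L) :
    |Real.sin (Real.pi / L * (t * L / (2 * Real.pi) * Real.sin (2 * Real.pi * u / L)
        - t * L / (2 * Real.pi) * Real.sin (2 * Real.pi * v / L)))|
      ≤ |Real.sin (Real.pi * (u - v) / L)| := by
  have hargument : π / L * (t * L / (2 * π) * sin (2 * π * u / L)
        - t * L / (2 * π) * sin (2 * π * v / L))
      = t * sin (π * (u - v) / L) * cos (π * (u + v) / L) := by
    have hdiff := sin_two_mul_sub_sin_two_mul (π * u / L) (π * v / L)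
    rw [← mul_sub, show 2 * π * u / L = 2 * (π * u / L) by ring,
      show 2 * π * v / L = 2 * (π * v / L) by ring, hdiff]
    field_simp [hL.ne', pi_pos.ne']
  rw [hargument]
  exact abs_sin_mul_sin_mul_cos_le (abs_le.2 ⟨by linarith [ht.1], ht.2⟩) _ _
end

section
/- Let |·|_L be the norm on ℝ⁴ defined by |a|_L = (L/π)·( Σ_{j=1}^{4} sin²(π a_j / L) )^{1/2}, and for a ∈ ℝ⁴ let (a)_T = (L/(2π))·(sin(2π a₁/L), …, sin(2π a₄/L)). Then for all x, y ∈ ℝ⁴ and t ∈ [0,1]: |t·(x)_T − t·(y)_T|_L ≤ |x − y|_L. -/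
/-- The periodic norm `|a|_L = (L/π)·(Σ_j sin²(π a_j/L))^{1/2}` on `ℝ⁴`. -/
noncomputable def normL (L : ℝ) (a : Fin 4 → ℝ) : ℝ :=
  L / Real.pi * Real.sqrt (∑ j, Real.sin (Real.pi * a j / L) ^ 2)

/-- The torus periodization `(a)_T = (L/(2π))·(sin(2π a_j/L))_j`. -/
noncomputable def torusVec (L : ℝ) (a : Fin 4 → ℝ) : Fin 4 → ℝ :=
  fun j => L / (2 * Real.pi) * Real.sin (2 * Real.pi * a j / L)

/-!
Coordinatewise, `π/L` times the `j`-th entry of `t • (x)_T - t • (y)_T` is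
`t · sin(u - v) cos(u + v)` with `u = π x_j / L`, `v = π y_j / L` (sum-to-product formula).
Since `sin² s ≤ s²` and `t², cos² ≤ 1`, its squared sine is at most `sin²(u - v)`, which is the
`j`-th summand of `|x - y|_L`.
-/

open Real

theorem sin_sq_mul_half_sin_sub_sin_le {t : ℝ} (ht : |t| ≤ 1) (u v : ℝ) :
    sin (t * ((sin (2 * u) - sin (2 * v)) / 2)) ^ 2 ≤ sin (u - v) ^ 2 := by
  have sum_to_product : (sin (2 * u) - sin (2 * v)) / 2 = sin (u - v) * cos (u + v) := by
    rw [sin_sub_sin]; ring_nf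
  have ht_sq : t ^ 2 ≤ 1 := by rw [sq_le_one_iff_abs_le_one]; exact ht
  calc sin (t * ((sin (2 * u) - sin (2 * v)) / 2)) ^ 2
      ≤ (t * ((sin (2 * u) - sin (2 * v)) / 2)) ^ 2 := sin_sq_le_sq
    _ = (t ^ 2 * cos (u + v) ^ 2) * sin (u - v) ^ 2 := by rw [sum_to_product]; ring
    _ ≤ sin (u - v) ^ 2 :=
        mul_le_of_le_one_left (sq_nonneg _)
          (mul_le_one₀ ht_sq (sq_nonneg _) (cos_sq_le_one _))

theorem normL_le_normL_of_sin_sq_le {L : ℝ} (hL : 0 ≤ L) {a b : Fin 4 → ℝ}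
    (h : ∀ j, sin (π * a j / L) ^ 2 ≤ sin (π * b j / L) ^ 2) :
    normL L a ≤ normL L b :=
  mul_le_mul_of_nonneg_left (sqrt_le_sqrt (Finset.sum_le_sum fun j _ => h j))
    (div_nonneg hL pi_pos.le)

theorem pi_mul_smul_torusVec_sub_div {L : ℝ} (hL : L ≠ 0) (t : ℝ) (x y : Fin 4 → ℝ)
    (j : Fin 4) :
    π * (t • torusVec L x - t • torusVec L y) j / L
      = t * ((sin (2 * (π * x j / L)) - sin (2 * (π * y j / L))) / 2) := by
  simp only [Pi.sub_apply, Pi.smul_apply, smul_eq_mul, torusVec]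
  field_simp

theorem torus_contraction (L : ℝ) (hL : 0 < L) (x y : Fin 4 → ℝ) (t : ℝ)
    (ht : t ∈ Set.Icc (0:ℝ) 1) :
    normL L (t • torusVec L x - t • torusVec L y) ≤ normL L (x - y) := by
  have ht_abs : |t| ≤ 1 := abs_le.2 ⟨by linarith [ht.1], ht.2⟩
  refine normL_le_normL_of_sin_sq_le hL.le fun j => ?_
  rw [pi_mul_smul_torusVec_sub_div hL.ne', Pi.sub_apply, mul_sub, sub_div (π * x j)]
  exact sin_sq_mul_half_sin_sub_sin_le ht_abs (π * x j / L) (π * y j / L)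
end

section
/- Let f: ℝ⁴ → ℂ be measurable with |f(q)| ≤ K/|q|⁴ for |q| ≥ 1, let χ: ℝ⁴ → [0,1] be Lipschitz with Lipschitz constant ≤ M·2^{−N}, supported in {|q| ≤ 2^{N+1}} and equal to 1 on {|q| ≤ 2^N}, and let c ∈ ℝ⁴ be fixed. Then ∫_{ℝ⁴} |f(q)| · |χ(q + c) − χ(q)| dq ≤ C(K, M, |c|) · 2^{−N}, where the constant C does not depend on N (for N large enough that 2^{N−1} ≥ |c| + 1). -/
/-!
Shifting by `c` changes `χ` only on the shell `2^N - ‖c‖ < ‖q‖ ≤ 2^(N+1) + ‖c‖`, where the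
Lipschitz bound gives `|χ (q + c) - χ q| ≤ M 2^(-N) ‖c‖` and the decay of `f` gives
`‖f q‖ ≲ K 2^(-4N)`. The shell has volume `≲ 2^(4N)`, so the powers of `2^N` cancel except for
the factor `2^(-N)` coming from the Lipschitz constant.
-/

open MeasureTheory Metric Module

section Shift

variable {E : Type*} [SeminormedAddCommGroup E] {a b : ℝ} {c : E}

theorem shift_eq_of_norm_add_le {α : Type*} {χ : E → α} {y : α} {q : E}
    (hχ : ∀ q, ‖q‖ ≤ a → χ q = y) (hq : ‖q‖ + ‖c‖ ≤ a) :
    χ (q + c) = χ q := by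
  rw [hχ q (by linarith [norm_nonneg c]), hχ _ ((norm_add_le q c).trans hq)]

theorem shift_eq_of_add_norm_lt {α : Type*} {χ : E → α} {y : α} {q : E}
    (hχ : ∀ q, b < ‖q‖ → χ q = y) (hq : b + ‖c‖ < ‖q‖) :
    χ (q + c) = χ q := by
  have : ‖q‖ ≤ ‖q + c‖ + ‖c‖ := by simpa using norm_sub_le (q + c) c
  rw [hχ q (by linarith [norm_nonneg c]), hχ _ (by linarith)]

theorem norm_mul_abs_shift_sub_le_indicator {F : Type*} [SeminormedAddCommGroup F]
    {f : E → F} {χ : E → ℝ} {B L R : ℝ} (hB : 0 ≤ B) (hL : 0 ≤ L)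
    (hf : ∀ q, a - ‖c‖ < ‖q‖ → ‖f q‖ ≤ B)
    (hlip : ∀ q q', |χ q - χ q'| ≤ L * ‖q - q'‖)
    (hzero : ∀ q, b < ‖q‖ → χ q = 0) (hone : ∀ q, ‖q‖ ≤ a → χ q = 1) (hR : b + ‖c‖ ≤ R)
    (q : E) :
    ‖f q‖ * |χ (q + c) - χ q| ≤ (closedBall 0 R).indicator (fun _ ↦ B * (L * ‖c‖)) q := by
  have hconst : ‖q‖ + ‖c‖ ≤ a ∨ b + ‖c‖ < ‖q‖ → χ (q + c) = χ q := by
    rintro (h | h)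
    exacts [shift_eq_of_norm_add_le hone h, shift_eq_of_add_norm_lt hzero h]
  by_cases hshell : ‖q‖ + ‖c‖ ≤ a ∨ b + ‖c‖ < ‖q‖
  · rw [hconst hshell, sub_self, abs_zero, mul_zero]
    exact Set.indicator_nonneg (fun _ _ ↦ by positivity) q
  push Not at hshell
  rw [Set.indicator_of_mem (by rw [mem_closedBall_zero_iff]; linarith)]
  have hshift : |χ (q + c) - χ q| ≤ L * ‖c‖ := by simpa using hlip (q + c) q
  exact mul_le_mul (hf q (by linarith)) hshift (abs_nonneg _) hB

end Shift

theorem integral_le_measureReal_mul_of_le_indicator {X : Type*} [MeasurableSpace X]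
    {μ : Measure X} {g : X → ℝ} {s : Set X} {A : ℝ} (hs : MeasurableSet s) (hμs : μ s ≠ ⊤)
    (hg0 : ∀ x, 0 ≤ g x) (hg : ∀ x, g x ≤ s.indicator (fun _ ↦ A) x) :
    ∫ x, g x ∂μ ≤ μ.real s * A := by
  have hint : Integrable (s.indicator fun _ ↦ A) μ :=
    (integrableOn_const hμs).integrable_indicator hs
  calc ∫ x, g x ∂μ ≤ ∫ x, s.indicator (fun _ ↦ A) x ∂μ :=
        integral_mono_of_nonneg (.of_forall hg0) hint (.of_forall hg)
    _ = μ.real s * A := by rw [integral_indicator_const _ hs, smul_eq_mul]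

theorem integral_norm_mul_abs_shift_sub_le {E F : Type*} [NormedAddCommGroup E]
    [NormedSpace ℝ E] [FiniteDimensional ℝ E] [MeasurableSpace E] [BorelSpace E]
    [SeminormedAddCommGroup F] (μ : Measure E) [μ.IsAddHaarMeasure]
    {f : E → F} {χ : E → ℝ} {c : E} {P K L : ℝ} (hK : 0 ≤ K) (hL : 0 ≤ L)
    (hc : ‖c‖ + 1 ≤ P / 2) (hf : ∀ q, 1 ≤ ‖q‖ → ‖f q‖ ≤ K / ‖q‖ ^ finrank ℝ E)
    (hlip : ∀ q q', |χ q - χ q'| ≤ L * ‖q - q'‖)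
    (hzero : ∀ q, 2 * P < ‖q‖ → χ q = 0) (hone : ∀ q, ‖q‖ ≤ P → χ q = 1) :
    ∫ q, ‖f q‖ * |χ (q + c) - χ q| ∂μ ≤ 8 ^ finrank ℝ E * K * L * ‖c‖ * μ.real (ball 0 1) := by
  have hP : 0 < P := by linarith [norm_nonneg c]
  have hf_shell : ∀ q, P - ‖c‖ < ‖q‖ → ‖f q‖ ≤ K / (P / 2) ^ finrank ℝ E := fun q hq ↦
    (hf q (by linarith)).trans <| div_le_div_of_nonneg_left hK (by positivity)
      (pow_le_pow_left₀ (half_pos hP).le (by linarith) _)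
  have hpoint := norm_mul_abs_shift_sub_le_indicator (R := 4 * P) (by positivity) hL hf_shell
    hlip hzero hone (by linarith)
  refine (integral_le_measureReal_mul_of_le_indicator measurableSet_closedBall
    measure_closedBall_lt_top.ne (fun q ↦ by positivity) hpoint).trans_eq ?_
  rw [Measure.addHaar_real_closedBall μ _ (by positivity),
    show (8 : ℝ) ^ finrank ℝ E = 4 ^ finrank ℝ E * 2 ^ finrank ℝ E by rw [← mul_pow]; norm_num,
      mul_pow, div_pow]
  field_simp

theorem cutoff_recentering (K M : ℝ) (hK : 0 < K) (hM : 0 < M)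
    (c : EuclideanSpace ℝ (Fin 4)) :
    ∃ C : ℝ, 0 < C ∧ ∀ N : ℕ, (2:ℝ) ^ ((N : ℤ) - 1) ≥ ‖c‖ + 1 →
      ∀ f : EuclideanSpace ℝ (Fin 4) → ℂ, Measurable f →
        (∀ q : EuclideanSpace ℝ (Fin 4), 1 ≤ ‖q‖ → ‖f q‖ ≤ K / ‖q‖ ^ 4) →
      ∀ χ : EuclideanSpace ℝ (Fin 4) → ℝ,
        (∀ q, χ q ∈ Set.Icc (0:ℝ) 1) →
        (∀ q q', |χ q - χ q'| ≤ M * (2:ℝ) ^ (-(N : ℤ)) * ‖q - q'‖) →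
        (∀ q : EuclideanSpace ℝ (Fin 4), (2:ℝ) ^ (N + 1) < ‖q‖ → χ q = 0) →
        (∀ q : EuclideanSpace ℝ (Fin 4), ‖q‖ ≤ (2:ℝ) ^ N → χ q = 1) →
        ∫ q : EuclideanSpace ℝ (Fin 4), ‖f q‖ * |χ (q + c) - χ q|
          ≤ C * (2:ℝ) ^ (-(N : ℤ)) := by
  set V := volume.real (ball (0 : EuclideanSpace ℝ (Fin 4)) 1)
  have hV : 0 < V := ENNReal.toReal_pos (measure_ball_pos _ _ one_pos).ne' measure_ball_lt_top.ne
  refine ⟨8 ^ 4 * K * M * (‖c‖ + 1) * V, by positivity, ?_⟩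
  intro N hN f _ hf χ _ hlip hzero hone
  have hc : ‖c‖ + 1 ≤ 2 ^ N / 2 := by
    rwa [zpow_sub₀ two_ne_zero, zpow_natCast, zpow_one, ge_iff_le] at hN
  have hdim : finrank ℝ (EuclideanSpace ℝ (Fin 4)) = 4 := finrank_euclideanSpace_fin
  have hbound := integral_norm_mul_abs_shift_sub_le volume (by positivity) (by positivity) hc
    (by rwa [hdim]) hlip (by rwa [← pow_succ']) hone
  rw [hdim] at hbound
  calc _ ≤ 8 ^ 4 * K * (M * 2 ^ (-(N : ℤ))) * ‖c‖ * V := hbound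
    _ = 8 ^ 4 * K * M * ‖c‖ * V * 2 ^ (-(N : ℤ)) := by ring
    _ ≤ 8 ^ 4 * K * M * (‖c‖ + 1) * V * 2 ^ (-(N : ℤ)) := by gcongr; linarith
end
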